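/- Let P be a Markov transition kernel on a measurable space 𝒳, C a measurable set, and V : 𝒳 → ℝ a function bounded below with PV(x) ≤ V(x) for all x ∉ C. Set a = inf_{x ∈ C} V(x) and D = {x : V(x) < a}. Then for every x ∈ D, the first return probability satisfies P_x(τ_C^+ < ∞) ≤ V(x)/a < 1 (assuming without loss of generality V ≥ 0, so a > 0 when D is nonempty). -/

import Mathlib

open MeasureTheory ENNReal

/-- `retProb P C n x` is the probability, starting from `x`, that the first return time
`τ_C^+ = inf {k ≥ 1 : X_k ∈ C}` equals `n + 1`; hence `∑' n, retProb P C n x = P_x(τ_C^+ < ∞)`. -/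
noncomputable def retProb {X : Type*} [MeasurableSpace X] (P : X → Measure X) (C : Set X) :
    ℕ → X → ℝ≥0∞
  | 0 => fun x => P x C
  | (n + 1) => fun x => ∫⁻ y in Cᶜ, retProb P C n y ∂(P x)

/-- Let `P` be a Markov kernel, `C` measurable and nonempty, and `V` a
(nonnegative, finite-valued — as one may assume WLOG after shifting by the lower bound)
function with `PV ≤ V` off `C`. With `a = ⨅_{z ∈ C} V z` and `D = {x : V x < a}`, for
every `x ∈ D` one has `P_x(τ_C^+ < ∞) ≤ V x / a < 1`. -/
theorem escape_probability_bound {X : Type*} [MeasurableSpace X]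
    (P : X → Measure X) (hP : ∀ x, IsProbabilityMeasure (P x)) (hPm : Measurable P)
    (C : Set X) (hC : MeasurableSet C) (hCne : C.Nonempty)
    (V : X → ℝ≥0∞) (hVm : Measurable V) (hVfin : ∀ x, V x ≠ ⊤)
    (hdrift : ∀ x ∉ C, ∫⁻ y, V y ∂(P x) ≤ V x) :
    ∀ x ∈ {y | V y < ⨅ z ∈ C, V z},
      (∑' n : ℕ, retProb P C n x) ≤ V x / (⨅ z ∈ C, V z) ∧
        V x / (⨅ z ∈ C, V z) < 1 := by
  intro x hx
  set a := ⨅ z ∈ C, V z with ha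
  have hx' : V x < a := hx
  have hxC : x ∉ C := fun h => absurd (biInf_le V h) (not_le.2 hx')
  have ha0 : a ≠ 0 := (lt_of_le_of_lt zero_le hx').ne'
  have ha_top : a ≠ ⊤ := by
    obtain ⟨z, hz⟩ := hCne
    exact ne_top_of_le_ne_top (hVfin z) (biInf_le V hz)
  have hmeas : ∀ n, Measurable (retProb P C n) := by
    intro n
    induction n with
    | zero => exact (Measure.measurable_coe hC).comp hPm
    | succ n ih =>
      have heq : ∀ y : X, retProb P C (n + 1) y
          = ∫⁻ z, Cᶜ.indicator (retProb P C n) z ∂(P y) := by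
        intro y
        show (∫⁻ z in Cᶜ, retProb P C n z ∂(P y)) = _
        exact (lintegral_indicator hC.compl (retProb P C n)).symm
      rw [show retProb P C (n + 1) = fun y => ∫⁻ z, Cᶜ.indicator (retProb P C n) z ∂(P y)
        from funext heq]
      exact (Measure.measurable_lintegral (ih.indicator hC.compl)).comp hPm
  have key : ∀ n, ∀ y, y ∉ C → a * ∑ k ∈ Finset.range n, retProb P C k y ≤ V y := by
    intro n
    induction n with
    | zero => intro y _; simp
    | succ n ih =>
      intro y hy
      have hsum : ∑ k ∈ Finset.range (n + 1), retProb P C k y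
          = P y C + ∫⁻ z in Cᶜ, (∑ k ∈ Finset.range n, retProb P C k z) ∂(P y) := by
        rw [Finset.sum_range_succ', add_comm]
        congr 1
        calc ∑ k ∈ Finset.range n, retProb P C (k + 1) y
            = ∑ k ∈ Finset.range n, ∫⁻ z in Cᶜ, retProb P C k z ∂(P y) := rfl
          _ = ∫⁻ z in Cᶜ, (∑ k ∈ Finset.range n, retProb P C k z) ∂(P y) :=
              (lintegral_finset_sum _ (fun k _ => hmeas k)).symm
      rw [hsum, mul_add]
      have h1 : a * P y C ≤ ∫⁻ z in C, V z ∂(P y) := by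
        calc a * P y C = ∫⁻ _ in C, a ∂(P y) := by rw [setLIntegral_const, mul_comm]
        _ ≤ ∫⁻ z in C, V z ∂(P y) :=
          setLIntegral_mono hVm (fun z hz => biInf_le V hz)
      have h2 : a * ∫⁻ z in Cᶜ, (∑ k ∈ Finset.range n, retProb P C k z) ∂(P y)
          ≤ ∫⁻ z in Cᶜ, V z ∂(P y) := by
        rw [← lintegral_const_mul a (Finset.measurable_sum _ (fun k _ => hmeas k))]
        exact setLIntegral_mono hVm (fun z hz => ih z hz)
      calc a * P y C + a * ∫⁻ z in Cᶜ, (∑ k ∈ Finset.range n, retProb P C k z) ∂(P y)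
          ≤ (∫⁻ z in C, V z ∂(P y)) + ∫⁻ z in Cᶜ, V z ∂(P y) := add_le_add h1 h2
        _ = ∫⁻ z, V z ∂(P y) := lintegral_add_compl V hC
        _ ≤ V y := hdrift y hy
  have htsum : a * ∑' n, retProb P C n x ≤ V x := by
    rw [ENNReal.tsum_eq_iSup_nat, ENNReal.mul_iSup]
    exact iSup_le fun n => key n x hxC
  constructor
  · rw [ENNReal.le_div_iff_mul_le (Or.inl ha0) (Or.inl ha_top), mul_comm]
    exact htsum
  · rw [ENNReal.div_lt_iff (Or.inl ha0) (Or.inl ha_top), one_mul]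
    exact hx'
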